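/- Assume that the dice construction is periodic: there exists M ≥ 1 such that for all i ≥ 1 one has p_{i+M} = p_i, N_{i+M} = N_i (so H_{i+M} ≅ H_i canonically), and under this identification Y_{i+M} = Y_i; assume moreover that at least one step in each period is a lucky dice roll (condition D holds at some step in every interval of M consecutive steps). Then the dice group G = ⟨w₁, A₁⟩ is periodic, i.e. every element of G has finite order. -/

import Mathlib

universe u

namespace DicePaper

/-- Words of length `n` over the level-indexed sequence of alphabets `X`. -/
def Word (X : ℕ → Type u) : ℕ → Type u
  | 0 => PUnit
  | n + 1 => X 0 × Word (fun k => X (k + 1)) n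

/-- An automorphism of the spherically homogeneous rooted tree with alphabets `X`,
encoded by its portrait: a permutation of the children alphabet at each vertex. -/
def TreeAut (X : ℕ → Type u) : Type u :=
  ∀ n, Word X n → Equiv.Perm (X n)

namespace TreeAut

/-- The section (state) of a tree automorphism at a first-level vertex. -/
def sec {X : ℕ → Type u} (f : TreeAut X) (x : X 0) : TreeAut fun k => X (k + 1) :=
  fun n v => f (n + 1) (x, v)

/-- Action of a tree automorphism on the vertices (words). -/
def act : ∀ (X : ℕ → Type u), TreeAut X → ∀ n, Word X n → Word X n
  | _, _, 0, _ => PUnit.unit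
  | X, f, n + 1, v => (f 0 PUnit.unit v.1, act (fun k => X (k + 1)) (f.sec v.1) n v.2)

/-- The inverse action on words. -/
def invAct : ∀ (X : ℕ → Type u), TreeAut X → ∀ n, Word X n → Word X n
  | _, _, 0, _ => PUnit.unit
  | X, f, n + 1, v =>
    ((f 0 PUnit.unit)⁻¹ v.1,
      invAct (fun k => X (k + 1)) (f.sec ((f 0 PUnit.unit)⁻¹ v.1)) n v.2)

variable {X : ℕ → Type u}

instance : One (TreeAut X) := ⟨fun _ _ => 1⟩
instance : Mul (TreeAut X) := ⟨fun f g n v => f n (act X g n v) * g n v⟩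
instance : Inv (TreeAut X) := ⟨fun f n v => (f n (invAct X f n v))⁻¹⟩

theorem one_apply (n : ℕ) (v : Word X n) : (1 : TreeAut X) n v = 1 := rfl
theorem mul_apply (f g : TreeAut X) (n : ℕ) (v : Word X n) :
    (f * g) n v = f n (act X g n v) * g n v := rfl
theorem inv_apply (f : TreeAut X) (n : ℕ) (v : Word X n) :
    f⁻¹ n v = (f n (invAct X f n v))⁻¹ := rfl

theorem act_one : ∀ (n : ℕ) (X : ℕ → Type u) (v : Word X n), act X 1 n v = v
  | 0, _, _ => rfl
  | n + 1, X, v => by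
    show ((1 : Equiv.Perm (X 0)) v.1, act _ (sec 1 v.1) n v.2) = v
    have : sec (1 : TreeAut X) v.1 = 1 := rfl
    rw [this, act_one n _ v.2]
    rfl

theorem sec_mul (f g : TreeAut X) (x : X 0) :
    sec (f * g) x = sec f (g 0 PUnit.unit x) * sec g x := rfl

theorem act_mul : ∀ (n : ℕ) (X : ℕ → Type u) (f g : TreeAut X) (v : Word X n),
    act X (f * g) n v = act X f n (act X g n v)
  | 0, _, _, _, _ => rfl
  | n + 1, X, f, g, v => by
    show ((f * g) 0 PUnit.unit v.1, act _ (sec (f * g) v.1) n v.2) = _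
    rw [sec_mul, act_mul n _ (sec f (g 0 PUnit.unit v.1)) (sec g v.1) v.2]
    rfl

theorem sec_inv (f : TreeAut X) (x : X 0) :
    sec f⁻¹ x = (sec f ((f 0 PUnit.unit)⁻¹ x))⁻¹ := by
  funext n v
  rfl

theorem act_invAct : ∀ (n : ℕ) (X : ℕ → Type u) (f : TreeAut X) (v : Word X n),
    act X f n (invAct X f n v) = v
  | 0, _, _, _ => rfl
  | n + 1, X, f, v => by
    show (f 0 PUnit.unit ((f 0 PUnit.unit)⁻¹ v.1),
      act _ (sec f ((f 0 PUnit.unit)⁻¹ v.1)) n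
        (invAct _ (sec f ((f 0 PUnit.unit)⁻¹ v.1)) n v.2)) = v
    rw [act_invAct n _ _ v.2]
    simp
    rfl

theorem invAct_act : ∀ (n : ℕ) (X : ℕ → Type u) (f : TreeAut X) (v : Word X n),
    invAct X f n (act X f n v) = v
  | 0, _, _, _ => rfl
  | n + 1, X, f, v => by
    show ((f 0 PUnit.unit)⁻¹ (f 0 PUnit.unit v.1),
      invAct _ (sec f ((f 0 PUnit.unit)⁻¹ (f 0 PUnit.unit v.1))) n
        (act _ (sec f v.1) n v.2)) = v
    have h : (f 0 PUnit.unit)⁻¹ (f 0 PUnit.unit v.1) = v.1 := by simp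
    rw [h, invAct_act n _ _ v.2]
    rfl

instance : Group (TreeAut X) where
  mul_assoc f g h := by
    funext n v
    show (f n (act X g n (act X h n v)) * g n (act X h n v)) * h n v
        = f n (act X (g * h) n v) * (g n (act X h n v) * h n v)
    rw [act_mul]
    exact mul_assoc _ _ _
  one_mul f := by
    funext n v
    show (1 : TreeAut X) n (act X f n v) * f n v = f n v
    rw [one_apply, one_mul]
  mul_one f := by
    funext n v
    show f n (act X 1 n v) * (1 : TreeAut X) n v = f n v
    rw [act_one, one_apply, mul_one]
  inv_mul_cancel f := by
    funext n v
    show f⁻¹ n (act X f n v) * f n v = 1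
    rw [inv_apply, invAct_act, inv_mul_cancel]

-- ===================== NEW MATERIAL =====================

/-- The permutation of the first level induced by a tree automorphism, as a hom. -/
def rootHom : TreeAut X →* Equiv.Perm (X 0) where
  toFun f := f 0 PUnit.unit
  map_one' := rfl
  map_mul' _ _ := rfl

theorem rootHom_apply (f : TreeAut X) : rootHom f = f 0 PUnit.unit := rfl

theorem apply_succ (f : TreeAut X) (n : ℕ) (v : Word X (n + 1)) :
    f (n + 1) v = sec f v.1 n v.2 := rfl

theorem sec_one (x : X 0) : sec (1 : TreeAut X) x = 1 := rfl

theorem sec_pow (f : TreeAut X) (hf : f 0 PUnit.unit = 1) (x : X 0) (n : ℕ) :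
    sec (f ^ n) x = (sec f x) ^ n := by
  induction n with
  | zero => rw [pow_zero, pow_zero]; rfl
  | succ n ih =>
    rw [pow_succ, sec_mul, hf]
    simp only [Equiv.Perm.one_apply]
    rw [ih, pow_succ]

theorem root_pow (f : TreeAut X) (hf : f 0 PUnit.unit = 1) (n : ℕ) :
    (f ^ n) 0 PUnit.unit = 1 := by
  have : rootHom (f ^ n) = (rootHom f) ^ n := map_pow _ _ _
  rw [rootHom_apply, rootHom_apply, hf] at this
  simpa using this

theorem sec_zpow (f : TreeAut X) (hf : f 0 PUnit.unit = 1) (x : X 0) (t : ℤ) :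
    sec (f ^ t) x = (sec f x) ^ t := by
  cases t with
  | ofNat n =>
    rw [Int.ofNat_eq_coe, zpow_natCast, zpow_natCast]
    exact sec_pow f hf x n
  | negSucc n =>
    rw [zpow_negSucc, zpow_negSucc]
    rw [sec_inv, root_pow f hf, sec_pow f hf]
    simp

theorem isOfFinOrder_of_sections [Fintype (X 0)] (f : TreeAut X)
    (hroot : f 0 PUnit.unit = 1) (hsec : ∀ x : X 0, IsOfFinOrder (sec f x)) :
    IsOfFinOrder f := by
  classical
  set n : ℕ := ∏ x : X 0, orderOf (sec f x) with hn
  have hnpos : 0 < n := Finset.prod_pos (fun x _ => (hsec x).orderOf_pos)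
  rw [isOfFinOrder_iff_pow_eq_one]
  refine ⟨n, hnpos, ?_⟩
  funext m v
  match m, v with
  | 0, v => exact root_pow f hroot n
  | m + 1, v =>
    show sec (f ^ n) v.1 m v.2 = (1 : TreeAut X) (m+1) v
    rw [sec_pow f hroot]
    have hdvd : orderOf (sec f v.1) ∣ n := Finset.dvd_prod_of_mem _ (Finset.mem_univ v.1)
    rw [orderOf_dvd_iff_pow_eq_one.mp hdvd]
    rfl

theorem isOfFinOrder_of_pow {G : Type*} [Group G] {g : G} {n : ℕ} (hn : 0 < n)
    (h : IsOfFinOrder (g ^ n)) : IsOfFinOrder g := by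
  rw [isOfFinOrder_iff_pow_eq_one] at h ⊢
  obtain ⟨m, hm, h⟩ := h
  exact ⟨n * m, by positivity, by rw [pow_mul]; exact h⟩

end TreeAut



section Dice

variable (p N : ℕ → ℕ)

/-- The elementary abelian group `H_{k+1} = C_{p_{k+1}}^{N_{k+1}}` (0-indexed). -/
abbrev Hgrp (k : ℕ) : Type := Fin (N k) → ZMod (p k)

variable (y : ∀ k, Fin (N (k + 1)) → Hgrp p N k)

/-- The portrait of the directed automorphism `w₁`: its nontrivial sections occur
only along the path `1_1 1_2 1_3 ⋯`; the section at `1_1 ⋯ 1_{k}` is `w_{k+1}`, and the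
section of `w_k` at a defining point `y_{k,j} ∈ Y_k` is the rooted automorphism `a_{k+1,j}`. -/
noncomputable def wPort : ∀ (p N : ℕ → ℕ) (y : ∀ k, Fin (N (k + 1)) → Hgrp p N k)
    (n : ℕ), Word (fun k => Hgrp p N k) n → Equiv.Perm (Hgrp p N n)
  | _, _, _, 0, _ => 1
  | p, N, y, n + 1, v =>
    if v.1 = 0 then
      wPort (fun k => p (k + 1)) (fun k => N (k + 1)) (fun k => y (k + 1)) n v.2
    else
      match n, v with
      | 0, v =>
        if h : ∃ j, y 0 j = v.1 then
          Equiv.addLeft (Pi.single h.choose (1 : ZMod (p 1)))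
        else 1
      | _ + 1, _ => 1

/-- The directed automorphism `w₁` of the spherically homogeneous tree `T`. -/
noncomputable def wDice : TreeAut fun k => Hgrp p N k := wPort p N y

/-- The rooted automorphism given by the basis element `a_{1,j} ∈ A₁` of `H₁`,
translating the first letter of every word. -/
def rootedDice (j : Fin (N 0)) : TreeAut fun k => Hgrp p N k :=
  fun n _ => match n with
  | 0 => Equiv.addLeft (Pi.single j (1 : ZMod (p 0)))
  | _ + 1 => 1

/-- The dice group `G = ⟨w₁, A₁⟩ ≤ Aut T`. -/
noncomputable def diceGroup : Subgroup (TreeAut fun k => Hgrp p N k) :=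
  Subgroup.closure ({wDice p N y} ∪ Set.range (rootedDice p N))

/-- The face `Π_{k+2}` of the cube `H_{k+2}` spanned by the basis vectors
`a_{k+2,j}`, `j ∈ Z`. -/
def face (k : ℕ) (Z : Set (Fin (N (k + 1)))) : AddSubgroup (Hgrp p N (k + 1)) :=
  AddSubgroup.closure {v | ∃ j ∈ Z, v = Pi.single j (1 : ZMod (p (k + 1)))}

/-- One step of the recursion in condition D: from `Z_m ⊆ Y_m` (recorded by indices)
pass to `Z_{m+1} = Y_{m+1} ∩ Π_{m+1}`. -/
def Znext (k : ℕ) (Z : Set (Fin (N (k + 1)))) : Set (Fin (N (k + 2))) :=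
  {j | y (k + 1) j ∈ face p N (k) Z}

/-- The recursion of condition D started at level `i` with the line
`l = ⟨x⟩` through `1_i`: `Z_i = Y_i ∩ l`, `Z_{m+1} = Y_{m+1} ∩ Π_{m+1}`. -/
def Zfam (i : ℕ) (x : Hgrp p N i) : ∀ m : ℕ, Set (Fin (N (i + m + 1)))
  | 0 => {j | y i j ∈ AddSubgroup.zmultiples x}
  | m + 1 => Znext p N y (i + m) (Zfam i x m)

/-- Condition D (lucky dice roll at step `i`): for every line through `1_i` in `H_i`
the recursion `Z_i, Z_{i+1}, Z_{i+2}, …` terminates, i.e. reaches the empty set. -/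
def LuckyD (i : ℕ) : Prop :=
  ∀ x : Hgrp p N i, x ≠ 0 → ∃ m : ℕ, Zfam p N y i x m = ∅

/-- Condition DDmin at step `i`: every line through `1_i` in `H_i` contains at most one
defining point of `Y_i`, and no axis `⟨a_{i+1,j}⟩` of `H_{i+1}` contains a point of `Y_{i+1}`. -/
def DDmin (i : ℕ) : Prop :=
  (∀ x : Hgrp p N i, x ≠ 0 → {j | y i j ∈ AddSubgroup.zmultiples x}.Subsingleton) ∧
  (∀ j : Fin (N (i + 1)), ∀ j' : Fin (N (i + 2)),
    y (i + 1) j' ∉ AddSubgroup.zmultiples (Pi.single j (1 : ZMod (p (i + 1)))))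

end Dice

-- ===================== NEW MATERIAL 2 =====================

section DiceProof

open TreeAut

/-- one-step shift of a level function -/
abbrev shft (f : ℕ → ℕ) : ℕ → ℕ := fun k => f (k + 1)

variable (p N : ℕ → ℕ) (y : ∀ k, Fin (N (k + 1)) → Hgrp p N k)

/-- one-step shift of the defining points -/
abbrev ysh : ∀ k, Fin (shft N (k + 1)) → Hgrp (shft p) (shft N) k := fun k => y (k + 1)

-- sanity defeq checks
example (j : ℕ) (W : Set (Fin (shft N (j + 1)))) :
    Znext (shft p) (shft N) (ysh p N y) j W = Znext p N y (j + 1) W := rfl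

example : wDice p N y 0 PUnit.unit = 1 := rfl

/-- rooted automorphism translating the first letter -/
def rt (r : Hgrp p N 0) : TreeAut fun k => Hgrp p N k :=
  fun n _ => match n with
  | 0 => Equiv.addLeft r
  | _ + 1 => 1

theorem addLeft_mul {A : Type} [AddGroup A] (a b : A) :
    (Equiv.addLeft a * Equiv.addLeft b : Equiv.Perm A) = Equiv.addLeft (a + b) := by
  ext x
  simp [Equiv.Perm.mul_apply, add_assoc]

theorem addLeft_zero' {A : Type} [AddGroup A] :
    (Equiv.addLeft (0 : A) : Equiv.Perm A) = 1 := by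
  ext x; simp

theorem rt_mul (a b : Hgrp p N 0) : rt p N a * rt p N b = rt p N (a + b) := by
  funext n v
  cases n with
  | zero => exact addLeft_mul a b
  | succ n =>
    show (1 * 1 : Equiv.Perm (Hgrp p N (n + 1))) = 1
    simp

theorem rt_zero : rt p N 0 = 1 := by
  funext n v
  cases n with
  | zero => exact addLeft_zero'
  | succ n => rfl

theorem rt_inv (a : Hgrp p N 0) : (rt p N a)⁻¹ = rt p N (-a) := by
  apply inv_eq_of_mul_eq_one_right
  rw [rt_mul, add_neg_cancel, rt_zero]

theorem rt_pow (a : Hgrp p N 0) (n : ℕ) : (rt p N a) ^ n = rt p N (n • a) := by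
  induction n with
  | zero => rw [pow_zero, zero_smul, rt_zero]
  | succ n ih => rw [pow_succ, ih, rt_mul, succ_nsmul]

theorem rt_zpow (a : Hgrp p N 0) (t : ℤ) : (rt p N a) ^ t = rt p N (t • a) := by
  cases t with
  | ofNat n => rw [Int.ofNat_eq_coe, zpow_natCast, rt_pow]; norm_num
  | negSucc n =>
    rw [zpow_negSucc, rt_pow, rt_inv, negSucc_zsmul]

theorem sec_rt (a : Hgrp p N 0) (x : Hgrp p N 0) : sec (rt p N a) x = 1 := by
  funext n v; rfl

theorem root_rt (a : Hgrp p N 0) : rt p N a 0 PUnit.unit = Equiv.addLeft a := rfl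

theorem root_w : wDice p N y 0 PUnit.unit = 1 := rfl

theorem sec_w_zero : sec (wDice p N y) 0 = wDice (shft p) (shft N) (ysh p N y) := by
  funext n v
  show wPort p N y (n + 1) (0, v) = wPort (shft p) (shft N) (ysh p N y) n v
  refine (wPort.eq_def p N y (n + 1) (0, v)).trans ?_
  simp

/-- value of the section of `w` at a nonzero vertex -/
noncomputable def secval (z : Hgrp p N 0) : Hgrp p N 1 :=
  if h : ∃ j, y 0 j = z then Pi.single h.choose (1 : ZMod (p 1)) else 0

theorem sec_w_ne (z : Hgrp p N 0) (hz : z ≠ 0) :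
    sec (wDice p N y) z = rt (shft p) (shft N) (secval p N y z) := by
  funext n v
  show wPort p N y (n + 1) (z, v) = rt (shft p) (shft N) (secval p N y z) n v
  refine (wPort.eq_def p N y (n + 1) (z, v)).trans ?_
  simp only [hz, if_false]
  cases n with
  | zero =>
    show (if h : ∃ j, y 0 j = z then
        Equiv.addLeft (Pi.single h.choose (1 : ZMod (p 1))) else 1)
      = Equiv.addLeft (secval p N y z)
    by_cases h : ∃ j, y 0 j = z
    · rw [dif_pos h, secval, dif_pos h]
    · rw [dif_neg h, secval, dif_neg h, addLeft_zero']
  | succ n => rfl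

-- ============ letters and words ============

/-- letters: rooted elements (tagged by their translation) and powers of `w` -/
noncomputable def letterVal : Hgrp p N 0 ⊕ ℤ → TreeAut fun k => Hgrp p N k
  | Sum.inl r => rt p N r
  | Sum.inr t => (wDice p N y) ^ t

def transOf : Hgrp p N 0 ⊕ ℤ → Hgrp p N 0
  | Sum.inl r => r
  | Sum.inr _ => 0

def tsum (L : List (Hgrp p N 0 ⊕ ℤ)) : Hgrp p N 0 := (L.map (transOf p N)).sum

noncomputable def prodT (L : List (Hgrp p N 0 ⊕ ℤ)) : TreeAut fun k => Hgrp p N k :=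
  (L.map (letterVal p N y)).prod

/-- the list of suffix translations at the `w`-letters -/
def wtaus : List (Hgrp p N 0 ⊕ ℤ) → List (Hgrp p N 0)
  | [] => []
  | Sum.inl _ :: L => wtaus L
  | Sum.inr _ :: L => tsum p N L :: wtaus L

/-- the induced list of letters of the section at `x` -/
noncomputable def nextOf :
    List (Hgrp p N 0 ⊕ ℤ) → Hgrp p N 0 → List (Hgrp (shft p) (shft N) 0 ⊕ ℤ)
  | [], _ => []
  | Sum.inl _ :: L, x => nextOf L x
  | Sum.inr t :: L, x =>
    (if tsum p N L + x = 0 then Sum.inr t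
     else Sum.inl (t • secval p N y (tsum p N L + x))) :: nextOf L x

theorem prodT_nil : prodT p N y [] = 1 := rfl

theorem prodT_cons (ℓ : Hgrp p N 0 ⊕ ℤ) (L) :
    prodT p N y (ℓ :: L) = letterVal p N y ℓ * prodT p N y L := by
  simp [prodT]

theorem prodT_append (L₁ L₂) :
    prodT p N y (L₁ ++ L₂) = prodT p N y L₁ * prodT p N y L₂ := by
  simp [prodT]

theorem tsum_nil : tsum p N [] = 0 := rfl

theorem tsum_cons (ℓ : Hgrp p N 0 ⊕ ℤ) (L) :
    tsum p N (ℓ :: L) = transOf p N ℓ + tsum p N L := by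
  simp [tsum]

theorem tsum_append (L₁ L₂) : tsum p N (L₁ ++ L₂) = tsum p N L₁ + tsum p N L₂ := by
  simp [tsum]

theorem root_letter (ℓ : Hgrp p N 0 ⊕ ℤ) :
    rootHom (letterVal p N y ℓ) = Equiv.addLeft (transOf p N ℓ) := by
  cases ℓ with
  | inl r => rfl
  | inr t =>
    show rootHom ((wDice p N y) ^ t) = _
    rw [map_zpow, rootHom_apply, root_w, one_zpow]
    rw [show transOf p N (Sum.inr t : Hgrp p N 0 ⊕ ℤ) = 0 from rfl, addLeft_zero']

theorem root_prodT (L) : rootHom (prodT p N y L) = Equiv.addLeft (tsum p N L) := by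
  induction L with
  | nil => rw [tsum_nil, addLeft_zero', prodT_nil, map_one]
  | cons ℓ L ih =>
    rw [prodT_cons, map_mul, root_letter, ih, addLeft_mul, tsum_cons]

theorem sec_prodT (L) (x : Hgrp p N 0) :
    sec (prodT p N y L) x
      = prodT (shft p) (shft N) (ysh p N y) (nextOf p N y L x) := by
  induction L with
  | nil => funext n v; rfl
  | cons ℓ L ih =>
    rw [prodT_cons, sec_mul]
    have hroot : prodT p N y L 0 PUnit.unit x = tsum p N L + x := by
      have h := root_prodT p N y L
      rw [rootHom_apply] at h
      rw [h]; rfl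
    rw [hroot]
    cases ℓ with
    | inl r =>
      show sec (rt p N r) _ * _ = _
      rw [sec_rt, one_mul, ih]
      rfl
    | inr t =>
      show sec ((wDice p N y) ^ t) _ * _ = _
      rw [sec_zpow _ (root_w p N y), ih]
      by_cases hz : tsum p N L + x = 0
      · rw [hz, sec_w_zero, nextOf, if_pos hz, prodT_cons]
        rfl
      · rw [sec_w_ne p N y _ hz, rt_zpow, nextOf, if_neg hz, prodT_cons]
        rfl

-- ============ counting lemmas ============

theorem wtaus_append (L₁ L₂ : List (Hgrp p N 0 ⊕ ℤ)) :
    wtaus p N (L₁ ++ L₂) = (wtaus p N L₁).map (· + tsum p N L₂) ++ wtaus p N L₂ := by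
  induction L₁ with
  | nil => simp [wtaus]
  | cons ℓ L ih =>
    cases ℓ with
    | inl r => simpa [wtaus] using ih
    | inr t => simp [wtaus, ih, tsum_append]

theorem length_wtaus_nextOf (L) (x : Hgrp p N 0) :
    (wtaus (shft p) (shft N) (nextOf p N y L x)).length
      = (wtaus p N L).count (-x) := by
  induction L with
  | nil => rfl
  | cons ℓ L ih =>
    cases ℓ with
    | inl r => exact ih
    | inr t =>
      rw [nextOf]
      by_cases hz : tsum p N L + x = 0
      · have he : tsum p N L = -x := by
          rw [eq_neg_iff_add_eq_zero]
          exact hz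
        rw [if_pos hz]
        show (wtaus (shft p) (shft N) (Sum.inr t :: nextOf p N y L x)).length = _
        rw [wtaus, wtaus, List.count_cons]
        simp [he, ih]
      · have he : ¬ (tsum p N L = -x) := fun h => hz (by rw [h]; simp)
        rw [if_neg hz]
        show (wtaus (shft p) (shft N) (Sum.inl _ :: nextOf p N y L x)).length = _
        rw [wtaus, wtaus, List.count_cons]
        simp [he, ih]

theorem mem_nextOf_inl (L) (x : Hgrp p N 0) (r : Hgrp (shft p) (shft N) 0)
    (hr : Sum.inl r ∈ nextOf p N y L x) :
    ∃ t : ℤ, ∃ τ ∈ wtaus p N L, τ + x ≠ 0 ∧ r = t • secval p N y (τ + x) := by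
  induction L with
  | nil => simp [nextOf] at hr
  | cons ℓ L ih =>
    cases ℓ with
    | inl r' => exact ih hr
    | inr t =>
      rw [nextOf] at hr
      rcases List.mem_cons.mp hr with h | h
      · by_cases hz : tsum p N L + x = 0
        · rw [if_pos hz] at h; exact absurd h (by simp)
        · rw [if_neg hz] at h
          have : r = t • secval p N y (tsum p N L + x) := by
            exact Sum.inl.inj h
          exact ⟨t, tsum p N L, by rw [wtaus]; exact List.mem_cons_self, hz, this⟩
      · obtain ⟨t', τ, hτ, hne, he⟩ := ih h
        exact ⟨t', τ, by rw [wtaus]; exact List.mem_cons_of_mem _ hτ, hne, he⟩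

theorem prodT_flatten_replicate (n : ℕ) (L : List (Hgrp p N 0 ⊕ ℤ)) :
    prodT p N y ((List.replicate n L).flatten) = (prodT p N y L) ^ n := by
  induction n with
  | zero => simp [prodT_nil]
  | succ n ih =>
    rw [List.replicate_succ, List.flatten_cons, prodT_append, ih, pow_succ']

theorem tsum_flatten_replicate (n : ℕ) (L : List (Hgrp p N 0 ⊕ ℤ)) :
    tsum p N ((List.replicate n L).flatten) = n • tsum p N L := by
  induction n with
  | zero => simp [tsum]
  | succ n ih =>
    rw [List.replicate_succ, List.flatten_cons, tsum_append, ih, succ_nsmul]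
    ring_nf

theorem count_wtaus_flatten_replicate (n : ℕ) (L : List (Hgrp p N 0 ⊕ ℤ)) (v : Hgrp p N 0) :
    (wtaus p N ((List.replicate n L).flatten)).count v
      = ∑ r ∈ Finset.range n, (wtaus p N L).count (v - r • tsum p N L) := by
  induction n with
  | zero => simp [wtaus]
  | succ n ih =>
    rw [List.replicate_succ, List.flatten_cons, wtaus_append, List.count_append,
      tsum_flatten_replicate, ih, Finset.sum_range_succ, add_comm]
    congr 1
    have h2 := List.count_map_of_injective (wtaus p N L)
      (· + n • tsum p N L) (add_left_injective _) (v - n • tsum p N L)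
    rw [sub_add_cancel] at h2
    exact h2

theorem mem_wtaus_flatten_replicate (n : ℕ) (L : List (Hgrp p N 0 ⊕ ℤ)) (τ' : Hgrp p N 0)
    (h : τ' ∈ wtaus p N ((List.replicate n L).flatten)) :
    ∃ τ ∈ wtaus p N L, ∃ r : ℕ, τ' = τ + r • tsum p N L := by
  induction n with
  | zero => simp [wtaus] at h
  | succ n ih =>
    rw [List.replicate_succ, List.flatten_cons, wtaus_append] at h
    rcases List.mem_append.mp h with h | h
    · obtain ⟨τ, hτ, he⟩ := List.mem_map.mp h
      exact ⟨τ, hτ, n, by rw [← he, tsum_flatten_replicate]⟩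
    · exact ih h

theorem mem_flatten_replicate {α : Type} (n : ℕ) (L : List α) (a : α)
    (h : a ∈ (List.replicate n L).flatten) : a ∈ L := by
  obtain ⟨l, hl, ha⟩ := List.mem_flatten.mp h
  rwa [List.eq_of_mem_replicate hl] at ha

end DiceProof

-- ============ generic counting lemmas ============

theorem sum_count_le_countP {α : Type} [DecidableEq α] (l : List α) (n : ℕ) (v : ℕ → α)
    (hinj : ∀ r, r < n → ∀ r', r' < n → v r = v r' → r = r')
    (S : α → Prop) [DecidablePred S] (hS : ∀ r, r < n → S (v r)) :
    (∑ r ∈ Finset.range n, l.count (v r)) ≤ l.countP (fun a => decide (S a)) := by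
  induction l with
  | nil => simp
  | cons a l ih =>
    rw [List.countP_cons]
    have hsplit : (∑ r ∈ Finset.range n, (a :: l).count (v r))
        = (∑ r ∈ Finset.range n, l.count (v r))
          + (∑ r ∈ Finset.range n, if a = v r then 1 else 0) := by
      rw [← Finset.sum_add_distrib]
      refine Finset.sum_congr rfl fun r hr => ?_
      rw [List.count_cons]
      congr 1
      simp
    rw [hsplit]
    refine Nat.add_le_add ih ?_
    by_cases hex : ∃ r, r < n ∧ v r = a
    · obtain ⟨r₀, hr₀, hvr₀⟩ := hex
      have hSa : S a := hvr₀ ▸ hS r₀ hr₀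
      rw [if_pos (by simpa using hSa)]
      calc (∑ r ∈ Finset.range n, if a = v r then 1 else 0)
          = ((Finset.range n).filter (fun r => a = v r)).card := by
            rw [Finset.card_filter]
        _ ≤ 1 := Finset.card_le_one.mpr (fun i hi j hj => by
            simp only [Finset.mem_filter, Finset.mem_range] at hi hj
            exact hinj i hi.1 j hj.1 (hi.2.symm.trans hj.2))
    · have hzero : ∀ r ∈ Finset.range n, (if a = v r then 1 else 0) = 0 := fun r hr => by
        rw [if_neg]
        exact fun h => hex ⟨r, Finset.mem_range.mp hr, h.symm⟩
      rw [Finset.sum_congr rfl hzero]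
      simp

theorem countP_lt_length' {α : Type} (l : List α) (P : α → Bool) (a : α)
    (ha : a ∈ l) (hna : ¬ P a) :
    l.countP P < l.length := by
  refine lt_of_le_of_ne (List.countP_le_length) fun h => ?_
  exact hna (List.countP_eq_length.mp h a ha)

theorem count_eq_length_of_all {α : Type} [DecidableEq α] (l : List α) (c : α)
    (h : ∀ a ∈ l, a = c) : l.count c = l.length := by
  rw [List.count, List.countP_eq_length]
  intro a ha
  simpa using h a ha

-- ============ Zfam transport machinery ============

section ZfamTransport

variable (p N : ℕ → ℕ) (y : ∀ k, Fin (N (k + 1)) → Hgrp p N k)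

/-- generalized `Zfam` recursion with an arbitrary starting set -/
def ZS (i : ℕ) (Z : Set (Fin (N (i + 1)))) : ∀ m : ℕ, Set (Fin (N (i + m + 1)))
  | 0 => Z
  | m + 1 => Znext p N y (i + m) (ZS i Z m)

theorem zfam_eq_ZS (i : ℕ) (x : Hgrp p N i) (m : ℕ) :
    Zfam p N y i x m = ZS p N y i {j | y i j ∈ AddSubgroup.zmultiples x} m := by
  induction m with
  | zero => rfl
  | succ m ih => rw [Zfam, ZS, ih]

theorem znext_congr {a a' : ℕ} (h : a = a') {Z : Set (Fin (N (a + 1)))}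
    {Z' : Set (Fin (N (a' + 1)))} (hZ : HEq Z Z') :
    HEq (Znext p N y a Z) (Znext p N y a' Z') := by
  subst h
  rw [eq_of_heq hZ]

theorem ZS_succ (m i : ℕ) (Z : Set (Fin (N (i + 1)))) :
    HEq (ZS p N y i Z (m + 1)) (ZS p N y (i + 1) (Znext p N y i Z) m) := by
  induction m with
  | zero => exact HEq.rfl
  | succ m ih =>
    show HEq (Znext p N y (i + (m + 1)) (ZS p N y i Z (m + 1))) _
    exact znext_congr p N y (by omega) ih

/-- the shifted `ZS` agrees with `ZS` one level down -/
theorem ZS_shift (m i : ℕ) (Z : Set (Fin (shft N (i + 1)))) :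
    HEq (ZS (shft p) (shft N) (ysh p N y) i Z m) (ZS p N y (i + 1) Z m) := by
  induction m with
  | zero => exact HEq.rfl
  | succ m ih =>
    show HEq (Znext (shft p) (shft N) (ysh p N y) (i + m)
      (ZS (shft p) (shft N) (ysh p N y) i Z m)) _
    rw [show Znext (shft p) (shft N) (ysh p N y) (i + m)
        (ZS (shft p) (shft N) (ysh p N y) i Z m)
      = Znext p N y ((i + m) + 1) (ZS (shft p) (shft N) (ysh p N y) i Z m) from rfl]
    exact znext_congr p N y (by omega) ih

/-- bottom-up recursion through the shifted data -/
def Zf : ∀ (p N : ℕ → ℕ) (_ : ∀ k, Fin (N (k + 1)) → Hgrp p N k) (m : ℕ),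
    Set (Fin (N 1)) → Set (Fin (N (m + 1)))
  | _, _, _, 0, Z => Z
  | p, N, y, m + 1, Z => Zf (shft p) (shft N) (ysh p N y) m (Znext p N y 0 Z)

theorem Zf_eq_ZS : ∀ (m : ℕ) (p N : ℕ → ℕ) (y : ∀ k, Fin (N (k + 1)) → Hgrp p N k)
    (Z : Set (Fin (N 1))), HEq (Zf p N y m Z) (ZS p N y 0 Z m)
  | 0, p, N, y, Z => HEq.rfl
  | m + 1, p, N, y, Z => by
    show HEq (Zf (shft p) (shft N) (ysh p N y) m (Znext p N y 0 Z)) _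
    refine HEq.trans (Zf_eq_ZS m (shft p) (shft N) (ysh p N y) (Znext p N y 0 Z)) ?_
    refine HEq.trans (ZS_shift p N y m 0 (Znext p N y 0 Z)) ?_
    exact (ZS_succ p N y m 0 Z).symm

/-- termination of the condition-D recursion, phrased recursively in the data -/
inductive TermZ : ∀ (p N : ℕ → ℕ) (_ : ∀ k, Fin (N (k + 1)) → Hgrp p N k),
    Set (Fin (N 1)) → Prop
  | done (p N : ℕ → ℕ) (y : ∀ k, Fin (N (k + 1)) → Hgrp p N k)
      (Z : Set (Fin (N 1))) : Z = ∅ → TermZ p N y Z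
  | step (p N : ℕ → ℕ) (y : ∀ k, Fin (N (k + 1)) → Hgrp p N k)
      (Z : Set (Fin (N 1))) :
      TermZ (shft p) (shft N) (ysh p N y) (Znext p N y 0 Z) → TermZ p N y Z

theorem termZ_of_Zf : ∀ (m : ℕ) (p N : ℕ → ℕ) (y : ∀ k, Fin (N (k + 1)) → Hgrp p N k)
    (Z : Set (Fin (N 1))), Zf p N y m Z = ∅ → TermZ p N y Z
  | 0, p, N, y, Z, h => TermZ.done p N y Z h
  | m + 1, p, N, y, Z, h =>
    TermZ.step p N y Z (termZ_of_Zf m (shft p) (shft N) (ysh p N y) (Znext p N y 0 Z) h)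

theorem set_empty_of_heq {A A' : Type} (h : A = A') {S : Set A} {S' : Set A'}
    (hh : HEq S S') (he : S' = ∅) : S = ∅ := by
  subst h
  rw [eq_of_heq hh]
  exact he

theorem termZ_of_luckyD (h : LuckyD p N y 0) (b : Hgrp p N 0) (hb : b ≠ 0) :
    TermZ p N y {j | y 0 j ∈ AddSubgroup.zmultiples b} := by
  obtain ⟨m, hm⟩ := h b hb
  rw [zfam_eq_ZS] at hm
  refine termZ_of_Zf m p N y _ ?_
  refine set_empty_of_heq (congrArg (fun t => Fin (N (t + 1))) (by omega : m = 0 + m))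
    ?_ hm
  exact Zf_eq_ZS m p N y _

theorem luckyD_shift (i : ℕ) (h : LuckyD p N y (i + 1)) :
    LuckyD (shft p) (shft N) (ysh p N y) i := by
  intro x hx
  obtain ⟨m, hm⟩ := h x hx
  refine ⟨m, ?_⟩
  rw [zfam_eq_ZS] at hm ⊢
  refine set_empty_of_heq
    (congrArg (fun t => Fin (N (t + 1))) (by omega : i + m + 1 = i + 1 + m)) ?_ hm
  exact ZS_shift p N y m i _

end ZfamTransport

-- ============ hypothesis bundle ============

section MainProof

open TreeAut

structure Good (p N : ℕ → ℕ) (y : ∀ k, Fin (N (k + 1)) → Hgrp p N k) : Prop where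
  hp : ∀ i, (p i).Prime
  hy0 : ∀ k j, y k j ≠ 0
  hE : ∃ E, 0 < E ∧ ∀ i, p i ∣ E
  lucky : ∀ i, ∃ e, LuckyD p N y (i + e)

theorem Good.shift {p N : ℕ → ℕ} {y : ∀ k, Fin (N (k + 1)) → Hgrp p N k}
    (G : Good p N y) : Good (shft p) (shft N) (ysh p N y) where
  hp i := G.hp (i + 1)
  hy0 k j := G.hy0 (k + 1) j
  hE := by obtain ⟨E, hE0, hE⟩ := G.hE; exact ⟨E, hE0, fun i => hE (i + 1)⟩
  lucky i := by
    obtain ⟨e, he⟩ := G.lucky (i + 1)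
    rw [show i + 1 + e = (i + e) + 1 by omega] at he
    exact ⟨e, luckyD_shift p N y (i + e) he⟩

-- ============ order of w ============

theorem w_pow_apply (E : ℕ) :
    ∀ (n : ℕ) (p N : ℕ → ℕ) (y : ∀ k, Fin (N (k + 1)) → Hgrp p N k),
      (∀ i, p i ∣ E) → ∀ v : Word (fun k => Hgrp p N k) n,
      ((wDice p N y) ^ E) n v = 1
  | 0, p, N, y, _, v => root_pow _ (root_w p N y) E
  | n + 1, p, N, y, hE, v => by
    show sec ((wDice p N y) ^ E) v.1 n v.2 = 1
    rw [sec_pow _ (root_w p N y)]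
    by_cases h : v.1 = 0
    · rw [h, sec_w_zero]
      exact w_pow_apply E n (shft p) (shft N) (ysh p N y) (fun i => hE (i + 1)) v.2
    · rw [sec_w_ne p N y _ h, rt_pow]
      have hcast : ((E : ℕ) : ZMod (p 1)) = 0 := by
        obtain ⟨c, hc⟩ := hE 1
        rw [hc]
        push_cast
        simp [ZMod.natCast_self]
      have hz : (E • secval p N y v.1) = 0 := by
        funext j
        rw [Pi.smul_apply, nsmul_eq_mul, hcast, zero_mul]
        rfl
      rw [hz, rt_zero]
      rfl

theorem isOfFinOrder_wzpow {p N : ℕ → ℕ} {y : ∀ k, Fin (N (k + 1)) → Hgrp p N k}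
    (G : Good p N y) (t : ℤ) : IsOfFinOrder ((wDice p N y) ^ t) := by
  obtain ⟨E, hE0, hE⟩ := G.hE
  have hW : (wDice p N y) ^ E = 1 := by
    funext n v
    rw [w_pow_apply E n p N y hE v, one_apply]
  rw [isOfFinOrder_iff_pow_eq_one]
  refine ⟨E, hE0, ?_⟩
  rw [← zpow_natCast ((wDice p N y) ^ t) E, ← zpow_mul, mul_comm t (E : ℤ), zpow_mul,
    zpow_natCast, hW, one_zpow]

-- ============ basic finite-order facts for words ============

variable {p N : ℕ → ℕ} {y : ∀ k, Fin (N (k + 1)) → Hgrp p N k}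

theorem prodT_eq_rt_of_no_w (L) (h : wtaus p N L = []) :
    prodT p N y L = rt p N (tsum p N L) := by
  induction L with
  | nil => rw [prodT_nil, tsum_nil, rt_zero]
  | cons ℓ L ih =>
    cases ℓ with
    | inl r =>
      have h' : wtaus p N L = [] := h
      rw [prodT_cons, ih h', tsum_cons]
      show rt p N r * _ = _
      rw [rt_mul]
      rfl
    | inr t => exact absurd h (by rw [wtaus]; simp)

theorem fin_of_no_w (G : Good p N y) (L) (h : wtaus p N L = []) :
    IsOfFinOrder (prodT p N y L) := by
  rw [prodT_eq_rt_of_no_w L h, isOfFinOrder_iff_pow_eq_one]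
  refine ⟨p 0, (G.hp 0).pos, ?_⟩
  rw [rt_pow]
  have hz : (p 0) • tsum p N L = 0 := by
    funext j
    rw [Pi.smul_apply, nsmul_eq_mul, ZMod.natCast_self, zero_mul]
    rfl
  rw [hz, rt_zero]

theorem prodT_eq_wzpow_of_all_zero (L) (h : ∀ r, Sum.inl r ∈ L → r = 0) :
    ∃ T : ℤ, prodT p N y L = (wDice p N y) ^ T := by
  induction L with
  | nil => exact ⟨0, by rw [prodT_nil, zpow_zero]⟩
  | cons ℓ L ih =>
    obtain ⟨T, hT⟩ := ih (fun r hr => h r (List.mem_cons_of_mem _ hr))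
    cases ℓ with
    | inl r =>
      have hr0 : r = 0 := h r (List.mem_cons_self)
      refine ⟨T, ?_⟩
      rw [prodT_cons, hT]
      show rt p N r * _ = _
      rw [hr0, rt_zero, one_mul]
    | inr t =>
      refine ⟨t + T, ?_⟩
      rw [prodT_cons, hT]
      show (wDice p N y) ^ t * _ = _
      rw [← zpow_add]

theorem fin_of_all_zero (G : Good p N y) (L) (h : ∀ r, Sum.inl r ∈ L → r = 0) :
    IsOfFinOrder (prodT p N y L) := by
  obtain ⟨T, hT⟩ := prodT_eq_wzpow_of_all_zero L h
  rw [hT]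
  exact isOfFinOrder_wzpow G T

/-- the representation predicate -/
def Rep (y : ∀ k, Fin (N (k + 1)) → Hgrp p N k) (Q : AddSubgroup (Hgrp p N 0)) (k : ℕ)
    (g : TreeAut fun k => Hgrp p N k) : Prop :=
  ∃ L : List (Hgrp p N 0 ⊕ ℤ), g = prodT p N y L ∧ (wtaus p N L).length ≤ k ∧
    ∀ r, Sum.inl r ∈ L → r ∈ Q

theorem tsum_mem (L : List (Hgrp p N 0 ⊕ ℤ)) (Q : AddSubgroup (Hgrp p N 0))
    (h : ∀ r, Sum.inl r ∈ L → r ∈ Q) : tsum p N L ∈ Q := by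
  induction L with
  | nil => exact zero_mem Q
  | cons ℓ L ih =>
    rw [tsum_cons]
    refine add_mem ?_ (ih fun r hr => h r (List.mem_cons_of_mem _ hr))
    cases ℓ with
    | inl r => exact h r (List.mem_cons_self)
    | inr t => exact zero_mem Q

theorem good_neZero (G : Good p N y) (i : ℕ) : NeZero (p i) := ⟨(G.hp i).ne_zero⟩

theorem secval_zero (G : Good p N y) : secval p N y 0 = 0 := by
  rw [secval, dif_neg]
  rintro ⟨j, hj⟩
  exact G.hy0 0 j hj

theorem secval_smul_mem_face (S : AddSubgroup (Hgrp p N 0)) (z : Hgrp p N 0)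
    (hz : z ∈ S) (t : ℤ) :
    t • secval p N y z ∈ face p N 0 {j | y 0 j ∈ S} := by
  refine AddSubgroup.zsmul_mem _ ?_ t
  rw [secval]
  by_cases h : ∃ j, y 0 j = z
  · rw [dif_pos h]
    refine AddSubgroup.subset_closure ?_
    exact ⟨h.choose, by rw [Set.mem_setOf_eq, h.choose_spec]; exact hz, rfl⟩
  · rw [dif_neg h]
    exact zero_mem _

theorem distinct_shifts (G : Good p N y) (b : Hgrp p N 0) (hb : b ≠ 0) (z : Hgrp p N 0)
    (r : ℕ) (hr : r < p 0) (r' : ℕ) (hr' : r' < p 0)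
    (h : z - r • b = z - r' • b) : r = r' := by
  have h1 : r • b = r' • b := by
    have := sub_right_injective h
    exact this
  obtain ⟨j, hj⟩ : ∃ j, b j ≠ 0 := by
    by_contra hc
    push_neg at hc
    exact hb (funext hc)
  have h2 : (r : ZMod (p 0)) * b j = (r' : ZMod (p 0)) * b j := by
    have := congrFun h1 j
    simpa [Pi.smul_apply, nsmul_eq_mul] using this
  haveI : Fact (p 0).Prime := ⟨G.hp 0⟩
  have h3 : (r : ZMod (p 0)) = (r' : ZMod (p 0)) := mul_right_cancel₀ hj h2
  have h4 := congrArg ZMod.val h3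
  rwa [ZMod.val_natCast_of_lt hr, ZMod.val_natCast_of_lt hr'] at h4

-- ============ the core dichotomy lemma ============

theorem core (G : Good p N y) (k : ℕ) (Q : AddSubgroup (Hgrp p N 0))
    (Hlow : ∀ g', Rep (ysh p N y) ⊤ (k - 1) g' → IsOfFinOrder g')
    (Hbad : ∀ b : Hgrp p N 0, b ≠ 0 → b ∈ Q →
      ∀ g', Rep (ysh p N y) (face p N 0 {j | y 0 j ∈ AddSubgroup.zmultiples b}) k g' →
        IsOfFinOrder g')
    (g : TreeAut fun k => Hgrp p N k) (hg : Rep y Q k g) :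
    IsOfFinOrder g := by
  classical
  haveI : NeZero (p 0) := good_neZero G 0
  obtain ⟨L, rfl, hk, hmem⟩ := hg
  by_cases h0 : wtaus p N L = []
  · exact fin_of_no_w G L h0
  have finFromSections : ∀ M : List (Hgrp p N 0 ⊕ ℤ), tsum p N M = 0 →
      (∀ x : Hgrp p N 0,
        IsOfFinOrder (prodT (shft p) (shft N) (ysh p N y) (nextOf p N y M x))) →
      IsOfFinOrder (prodT p N y M) := by
    intro M hM hsecs
    refine isOfFinOrder_of_sections _ ?_ ?_
    · have hr := root_prodT p N y M
      rw [rootHom_apply] at hr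
      rw [hr, hM, addLeft_zero']
    · intro x
      rw [sec_prodT]
      exact hsecs x
  set T := wtaus p N L with hTdef
  have hTne : T ≠ [] := h0
  have hTpos : 0 < T.length := List.length_pos_iff.mpr hTne
  have hhead : T.head hTne ∈ T := List.head_mem hTne
  have hkpos : 1 ≤ k := le_trans hTpos hk
  by_cases hb : tsum p N L = 0
  · -- g already stabilizes the first level
    refine finFromSections L hb ?_
    intro x
    by_cases hall : ∀ τ ∈ T, τ = T.head hTne
    · by_cases hx : T.head hTne = -x
      · -- all letters of the section are trivial or powers of w
        refine fin_of_all_zero G.shift _ ?_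
        intro r hr
        obtain ⟨t, τ, hτ, hne, he⟩ := mem_nextOf_inl p N y L x r hr
        have hτx : τ + x = 0 := by
          rw [hall τ hτ, hx]
          simp
        rw [he, hτx, secval_zero G, smul_zero]
      · -- no w-letters in the section at all
        refine fin_of_no_w G.shift _ ?_
        rw [← List.length_eq_zero_iff, length_wtaus_nextOf, ← hTdef]
        rw [List.count_eq_zero]
        intro hmem2
        exact hx (hall _ hmem2).symm
    · -- sections have fewer w-letters
      push_neg at hall
      obtain ⟨τ₀, hτ₀, hτ₀n⟩ := hall
      refine Hlow _ ⟨nextOf p N y L x, rfl, ?_, fun r _ => AddSubgroup.mem_top r⟩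
      rw [length_wtaus_nextOf, ← hTdef]
      have hlt : T.count (-x) < T.length := by
        rw [List.count_eq_countP]
        by_cases hhx : T.head hTne = -x
        · refine countP_lt_length' T _ τ₀ hτ₀ ?_
          simp only [beq_iff_eq, Bool.not_eq_true]
          rw [← hhx] at *
          simpa using hτ₀n
        · refine countP_lt_length' T _ (T.head hTne) hhead ?_
          simpa using hhx
      omega
  · -- the total translation b is nontrivial; pass to g ^ (p 0)
    set b := tsum p N L with hbdef
    refine isOfFinOrder_of_pow (G.hp 0).pos ?_
    rw [← prodT_flatten_replicate]
    set Lp := (List.replicate (p 0) L).flatten with hLp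
    have htsum : tsum p N Lp = 0 := by
      rw [hLp, tsum_flatten_replicate]
      funext j
      rw [Pi.smul_apply, nsmul_eq_mul, ZMod.natCast_self, zero_mul]
      rfl
    refine finFromSections Lp htsum ?_
    intro x
    have hcount : (wtaus (shft p) (shft N) (nextOf p N y Lp x)).length
        = ∑ r ∈ Finset.range (p 0), T.count (-x - r • b) := by
      rw [length_wtaus_nextOf, hLp, count_wtaus_flatten_replicate]
    by_cases hall : ∀ τ ∈ T, τ - T.head hTne ∈ AddSubgroup.zmultiples b
    · -- spine in one coset of the line generated by b
      by_cases hx : T.head hTne + x ∈ AddSubgroup.zmultiples b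
      · -- the constrained recursion case
        refine Hbad b hb (by rw [hbdef]; exact tsum_mem L Q hmem) _
          ⟨nextOf p N y Lp x, rfl, ?_, ?_⟩
        · rw [hcount]
          calc ∑ r ∈ Finset.range (p 0), T.count (-x - r • b)
              ≤ T.countP (fun a => decide (a + x ∈ AddSubgroup.zmultiples b)) := by
                refine sum_count_le_countP T (p 0) _
                  (distinct_shifts G b hb (-x)) _ ?_
                intro r _
                have : (-x - r • b) + x = -(r • b) := by abel
                rw [this]
                exact neg_mem (AddSubgroup.nsmul_mem _ (AddSubgroup.mem_zmultiples b) r)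
            _ ≤ T.length := List.countP_le_length
            _ ≤ k := hk
        · intro r hr
          obtain ⟨t, τ', hτ', hne, he⟩ := mem_nextOf_inl p N y Lp x r hr
          obtain ⟨τ, hτ, rr, hrr⟩ := mem_wtaus_flatten_replicate p N (p 0) L τ' hτ'
          have hmem2 : τ' + x ∈ AddSubgroup.zmultiples b := by
            have hrw : τ' + x = (τ - T.head hTne) + rr • b + (T.head hTne + x) := by
              rw [hrr]; abel
            rw [hrw]
            exact add_mem (add_mem (hall τ hτ)
              (AddSubgroup.nsmul_mem _ (AddSubgroup.mem_zmultiples b) rr)) hx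
          rw [he]
          exact secval_smul_mem_face (AddSubgroup.zmultiples b) _ hmem2 t
      · -- off the coset: no w-letters at all
        refine fin_of_no_w G.shift _ ?_
        rw [← List.length_eq_zero_iff, hcount]
        refine Finset.sum_eq_zero ?_
        intro r _
        rw [List.count_eq_zero]
        intro hmem2
        refine hx ?_
        have h1 := hall _ hmem2
        have hrw : T.head hTne + x = -(( -x - r • b) - T.head hTne) - r • b := by abel
        rw [hrw]
        exact sub_mem (neg_mem h1) (AddSubgroup.nsmul_mem _ (AddSubgroup.mem_zmultiples b) r)
    · -- spine not in one coset: every section has fewer w-letters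
      push_neg at hall
      obtain ⟨τ₀, hτ₀, hτ₀n⟩ := hall
      refine Hlow _ ⟨nextOf p N y Lp x, rfl, ?_, fun r _ => AddSubgroup.mem_top r⟩
      rw [hcount]
      have hle : ∑ r ∈ Finset.range (p 0), T.count (-x - r • b)
          ≤ T.countP (fun a => decide (a + x ∈ AddSubgroup.zmultiples b)) := by
        refine sum_count_le_countP T (p 0) _
          (distinct_shifts G b hb (-x)) _ ?_
        intro r _
        have hrw : (-x - r • b) + x = -(r • b) := by abel
        rw [hrw]
        exact neg_mem (AddSubgroup.nsmul_mem _ (AddSubgroup.mem_zmultiples b) r)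
      have hlt : T.countP (fun a => decide (a + x ∈ AddSubgroup.zmultiples b)) < T.length := by
        by_cases hhx : T.head hTne + x ∈ AddSubgroup.zmultiples b
        · refine countP_lt_length' T _ τ₀ hτ₀ ?_
          simp only [decide_eq_true_eq, Bool.not_eq_true]
          intro hc
          refine hτ₀n ?_
          have hrw : τ₀ - T.head hTne = (τ₀ + x) - (T.head hTne + x) := by abel
          rw [hrw]
          exact sub_mem hc hhx
        · refine countP_lt_length' T _ (T.head hTne) hhead ?_
          simpa using hhx
      omega

-- ============ the main induction ============

theorem rep_mono {Q Q' : AddSubgroup (Hgrp p N 0)} (h : Q ≤ Q') {k : ℕ}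
    {g : TreeAut fun k => Hgrp p N k} (hg : Rep y Q k g) : Rep y Q' k g := by
  obtain ⟨L, h1, h2, h3⟩ := hg
  exact ⟨L, h1, h2, fun r hr => h (h3 r hr)⟩

theorem face_mono {k : ℕ} {Z₁ Z₂ : Set (Fin (N (k + 1)))} (h : Z₁ ⊆ Z₂) :
    face p N k Z₁ ≤ face p N k Z₂ := by
  refine AddSubgroup.closure_mono ?_
  rintro v ⟨j, hj, rfl⟩
  exact ⟨j, h hj, rfl⟩

/-- the global statement for words with at most `k` w-letters -/
def AllFin (k : ℕ) : Prop :=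
  ∀ (p N : ℕ → ℕ) (y : ∀ k', Fin (N (k' + 1)) → Hgrp p N k'), Good p N y →
    ∀ g : TreeAut fun k' => Hgrp p N k', Rep y ⊤ k g → IsOfFinOrder g

theorem allFin_zero : AllFin 0 := by
  intro p N y G g hg
  obtain ⟨L, rfl, hk, _⟩ := hg
  exact fin_of_no_w G L (List.length_eq_zero_iff.mp (Nat.le_zero.mp hk))

theorem allFin_pred (k : ℕ) (hlow : ∀ k' < k, AllFin k') : AllFin (k - 1) := by
  rcases Nat.eq_zero_or_pos k with h | h
  · rw [h]
    exact allFin_zero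
  · exact hlow (k - 1) (by omega)

/-- descent along a terminating condition-D recursion -/
theorem lemB (k : ℕ) (hlow : ∀ k' < k, AllFin k') :
    ∀ (p N : ℕ → ℕ) (y : ∀ k', Fin (N (k' + 1)) → Hgrp p N k') (Z : Set (Fin (N 1))),
      TermZ p N y Z → Good p N y →
      ∀ g, Rep (ysh p N y) (face p N 0 Z) k g → IsOfFinOrder g := by
  intro p N y Z ht
  induction ht with
  | done p N y Z hZ =>
    intro G g hg
    obtain ⟨L, rfl, hk, hmem⟩ := hg
    refine fin_of_all_zero G.shift L ?_
    intro r hr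
    have hrQ := hmem r hr
    have hempty : {v : Hgrp p N 1 | ∃ j ∈ Z, v = Pi.single j (1 : ZMod (p 1))} = ∅ := by
      rw [hZ]
      simp
    rw [face, hempty, AddSubgroup.closure_empty] at hrQ
    exact AddSubgroup.mem_bot.mp hrQ
  | step p N y Z ht ih =>
    intro G g hg
    have HlowAll : AllFin (k - 1) := allFin_pred k hlow
    refine core G.shift k (face p N 0 Z)
      (fun g' hg' => HlowAll _ _ _ G.shift.shift g' hg') ?_ g hg
    intro b hb hbQ g' hg'
    refine ih G.shift g' (rep_mono ?_ hg')
    refine face_mono ?_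
    intro j hj
    have hle : AddSubgroup.zmultiples b ≤ face p N 0 Z :=
      AddSubgroup.zmultiples_le.mpr hbQ
    exact hle hj

theorem allFin (k : ℕ) : AllFin k := by
  induction k using Nat.strong_induction_on with
  | _ k hlow =>
    have HlowAll : AllFin (k - 1) := allFin_pred k hlow
    have inner : ∀ e (p N : ℕ → ℕ) (y : ∀ k', Fin (N (k' + 1)) → Hgrp p N k'),
        Good p N y → LuckyD p N y e →
        ∀ g, Rep y ⊤ k g → IsOfFinOrder g := by
      intro e
      induction e using Nat.strong_induction_on with
      | _ e ihe =>
        intro p N y G hl g hg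
        refine core G k ⊤ (fun g' hg' => HlowAll _ _ _ G.shift g' hg') ?_ g hg
        intro b hb _ g' hg'
        rcases Nat.eq_zero_or_pos e with he | he
        · subst he
          exact lemB k hlow p N y _ (termZ_of_luckyD p N y hl b hb) G g' hg'
        · have hl' : LuckyD p N y ((e - 1) + 1) := by
            rw [show e - 1 + 1 = e by omega]
            exact hl
          exact ihe (e - 1) (by omega) (shft p) (shft N) (ysh p N y) G.shift
            (luckyD_shift p N y (e - 1) hl') g' (rep_mono le_top hg')
    intro p N y G g hg
    obtain ⟨e, he⟩ := G.lucky 0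
    rw [Nat.zero_add] at he
    exact inner e p N y G he g hg

/-- every finite product of generators and their inverses is representable -/
theorem rep_of_list (p N : ℕ → ℕ) (y : ∀ k', Fin (N (k' + 1)) → Hgrp p N k')
    (l : List (TreeAut fun k' => Hgrp p N k'))
    (hl : ∀ x ∈ l, x ∈ (({wDice p N y} ∪ Set.range (rootedDice p N))
      ∪ ({wDice p N y} ∪ Set.range (rootedDice p N))⁻¹ : Set (TreeAut fun k' => Hgrp p N k'))) :
    Rep y ⊤ l.length l.prod := by
  induction l with
  | nil => exact ⟨[], by rw [List.prod_nil, prodT_nil], by rw [wtaus]; simp, by simp⟩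
  | cons a l ih =>
    obtain ⟨L, hL1, hL2, _⟩ := ih (fun x hx => hl x (List.mem_cons_of_mem _ hx))
    have ha := hl a (List.mem_cons_self)
    have key : ∃ ta : Hgrp p N 0 ⊕ ℤ, a = letterVal p N y ta := by
      rcases ha with h | h
      · rcases h with h | ⟨j, hj⟩
        · exact ⟨Sum.inr 1, by rw [Set.mem_singleton_iff.mp h]; exact (zpow_one _).symm⟩
        · refine ⟨Sum.inl (Pi.single j (1 : ZMod (p 0))), ?_⟩
          rw [← hj]
          rfl
      · rw [Set.mem_inv] at h
        rcases h with h | ⟨j, hj⟩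
        · refine ⟨Sum.inr (-1), ?_⟩
          have : a⁻¹ = wDice p N y := Set.mem_singleton_iff.mp h
          rw [← inv_inv a, this]
          exact (zpow_neg_one _).symm
        · refine ⟨Sum.inl (-(Pi.single j (1 : ZMod (p 0)))), ?_⟩
          have hrd : rootedDice p N j = rt p N (Pi.single j (1 : ZMod (p 0))) := rfl
          have h2 : letterVal p N y (Sum.inl (-(Pi.single j (1 : ZMod (p 0)))))
              = rt p N (-(Pi.single j (1 : ZMod (p 0)))) := rfl
          rw [h2, ← rt_inv, ← hrd, hj, inv_inv]
    obtain ⟨ta, rfl⟩ := key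
    refine ⟨ta :: L, ?_, ?_, by simp⟩
    · rw [List.prod_cons, prodT_cons, hL1]
    · cases ta with
      | inl r =>
        rw [wtaus, List.length_cons]
        omega
      | inr t =>
        rw [wtaus, List.length_cons, List.length_cons]
        omega

end MainProof

end DicePaper

open DicePaper in
/-- if the dice construction is periodic with period `M` (the groups
`H_i` and the defining points `Y_i` repeat with period `M`, the latter stated via
`HEq` along the canonical identification `H_{i+M} = H_i`), and condition D holds at
some step in every interval of `M` consecutive steps, then the dice group
`G = ⟨w₁, A₁⟩` is periodic: every element has finite order. -/
theorem stmt16 (P : Finset ℕ) (hP : ∀ q ∈ P, q.Prime)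
    (p : ℕ → ℕ) (hp : ∀ i, p i ∈ P)
    (N : ℕ → ℕ) (hN : ∀ i, 0 < N i)
    (y : ∀ k, Fin (N (k + 1)) → Hgrp p N k)
    (hy0 : ∀ k j, y k j ≠ 0)
    (hyinj : ∀ k, Function.Injective (y k))
    (M : ℕ) (hM : 1 ≤ M)
    (hpper : ∀ i, p (i + M) = p i)
    (hNper : ∀ i, N (i + M) = N i)
    (hyper : ∀ i, HEq (y (i + M)) (y i))
    (hlucky : ∀ i : ℕ, ∃ k < M, LuckyD p N y (i + k)) :
    ∀ g ∈ diceGroup p N y, IsOfFinOrder g := by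
  intro g hg
  have G : Good p N y := by
    refine ⟨fun i => hP (p i) (hp i), hy0,
      ⟨P.prod id, ?_, fun i => Finset.dvd_prod_of_mem id (hp i)⟩, fun i => ?_⟩
    · exact Finset.prod_pos (fun q hq => (hP q hq).pos)
    · obtain ⟨kk, _, h⟩ := hlucky i
      exact ⟨kk, h⟩
  rw [diceGroup] at hg
  have hg2 : g ∈ Submonoid.closure ((({wDice p N y} ∪ Set.range (rootedDice p N)))
      ∪ ({wDice p N y} ∪ Set.range (rootedDice p N))⁻¹) := by
    rw [← Subgroup.closure_toSubmonoid]
    exact hg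
  obtain ⟨l, hl, hprod⟩ := Submonoid.exists_list_of_mem_closure hg2
  rw [← hprod]
  exact allFin l.length p N y G l.prod (rep_of_list p N y l hl)
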